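/- arXiv:1708.06716 — 2 statements merged into one kernel-verified Lean document; each statement's English description precedes it below -/
import Mathlib

section
/- Let Y be a disjunction-of-conjunctions gate over disjoint blocks B_1,…,B_K, and let v ∈ {0,1}^n be an actual input state in which no block is all-ones (so the actual outcome is Y = 0). Then the actual-cause candidate set x*(0) of the occurrence {Y = 0} is exactly the set of restrictions v|S such that v_i = 0 for every i ∈ S and |S ∩ B_j| = 1 for every j = 1,…,K; i.e., the actual cause of {Y = 0} consists of exactly one input in state 0 from each conjunction. -/
open Finset

/-- Disjunction-of-conjunctions gate over blocks `B 1, …, B K`: outputs `1` iff some block has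
all of its inputs in state `1`. -/
def DOC {n K : ℕ} (B : Fin K → Finset (Fin n)) (u : Fin n → Bool) : Bool :=
  decide (∃ j, ∀ i ∈ B j, u i = true)

/-- Effect probability `π(y | v|S) = 2^{-(n-|S|)} · #{u : u agrees with v on S ∧ Y u = y}`. -/
noncomputable def effProb {n : ℕ} (Y : (Fin n → Bool) → Bool) (v : Fin n → Bool)
    (S : Finset (Fin n)) (y : Bool) : ℝ :=
  ((univ.filter fun u : Fin n → Bool => (∀ i ∈ S, u i = v i) ∧ Y u = y).card : ℝ) /
    2 ^ (n - S.card)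

/-- Cause ratio `ρ(v|S) = log₂(π(y | v|S) / π(y))`, where `π(y) = π(y | v|∅)`. -/
noncomputable def causeRatio {n : ℕ} (Y : (Fin n → Bool) → Bool) (v : Fin n → Bool)
    (S : Finset (Fin n)) (y : Bool) : ℝ :=
  Real.logb 2 (effProb Y v S y / effProb Y v ∅ y)

/-- The actual-cause candidate set `x*(y)`: occurrences `v|S` maximizing the cause ratio `ρ`
over all subsets `S ⊆ {1,…,n}` and such that no proper subset attains the maximum. -/
def causeCandidates {n : ℕ} (Y : (Fin n → Bool) → Bool) (v : Fin n → Bool) (y : Bool) :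
    Set (Finset (Fin n)) :=
  {S | (∀ T : Finset (Fin n), causeRatio Y v T y ≤ causeRatio Y v S y) ∧
    ∀ T ⊂ S, causeRatio Y v T y ≠ causeRatio Y v S y}


section Aux
variable {n : ℕ} (v : Fin n → Bool)

lemma card_agree (S : Finset (Fin n)) :
    (univ.filter fun u : Fin n → Bool => ∀ i ∈ S, u i = v i).card = 2 ^ (n - S.card) := by
  have e : {u : Fin n → Bool // ∀ i ∈ S, u i = v i} ≃ ((Sᶜ : Finset (Fin n)) → Bool) :=
  { toFun := fun u i => u.1 i.1
    invFun := fun w => ⟨fun i => if h : i ∈ S then v i else w ⟨i, by simpa using h⟩,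
      fun i hi => by simp [hi]⟩
    left_inv := by
      rintro ⟨u, hu⟩
      ext i
      by_cases h : i ∈ S <;> simp [h, hu i]
    right_inv := by
      intro w
      ext ⟨i, hi⟩
      have hi' : i ∉ S := by simpa using hi
      simp [hi'] }
  have h1 : (univ.filter fun u : Fin n → Bool => ∀ i ∈ S, u i = v i).card
      = Fintype.card {u : Fin n → Bool // ∀ i ∈ S, u i = v i} := (Fintype.card_subtype _).symm
  rw [h1, Fintype.card_congr e]
  simp [card_compl]

lemma effProb_false_pos (Y : (Fin n → Bool) → Bool) (hvY : Y v = false) (S : Finset (Fin n)) :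
    0 < effProb Y v S false := by
  unfold effProb
  apply div_pos _ (by positivity)
  have hmem : v ∈ univ.filter fun u : Fin n → Bool => (∀ i ∈ S, u i = v i) ∧ Y u = false := by
    simp [hvY]
  exact_mod_cast Finset.card_pos.mpr ⟨v, hmem⟩

lemma effProb_le_one (Y : (Fin n → Bool) → Bool) (S : Finset (Fin n)) (y : Bool) :
    effProb Y v S y ≤ 1 := by
  unfold effProb
  rw [div_le_one (by positivity)]
  have hsub : (univ.filter fun u : Fin n → Bool => (∀ i ∈ S, u i = v i) ∧ Y u = y)
      ⊆ univ.filter fun u : Fin n → Bool => ∀ i ∈ S, u i = v i := by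
    intro u hu
    simp only [mem_filter] at hu ⊢
    exact ⟨hu.1, hu.2.1⟩
  calc ((univ.filter fun u : Fin n → Bool => (∀ i ∈ S, u i = v i) ∧ Y u = y).card : ℝ)
      ≤ ((univ.filter fun u : Fin n → Bool => ∀ i ∈ S, u i = v i).card : ℝ) := by
        exact_mod_cast Finset.card_le_card hsub
    _ = 2 ^ (n - S.card) := by rw [card_agree]; push_cast; ring

end Aux
section Aux2
variable {n K : ℕ} (B : Fin K → Finset (Fin n)) (v : Fin n → Bool)

lemma effProb_false_eq_one_iff (S : Finset (Fin n)) :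
    effProb (DOC B) v S false = 1 ↔ ∀ j, ∃ i ∈ S, i ∈ B j ∧ v i = false := by
  have hcard : effProb (DOC B) v S false = 1 ↔
      ∀ u : Fin n → Bool, (∀ i ∈ S, u i = v i) → DOC B u = false := by
    unfold effProb
    rw [div_eq_one_iff_eq (by positivity)]
    constructor
    · intro h u hu
      have hsub : (univ.filter fun u : Fin n → Bool => (∀ i ∈ S, u i = v i) ∧ DOC B u = false)
          ⊆ univ.filter fun u : Fin n → Bool => ∀ i ∈ S, u i = v i := by
        intro w hw
        simp only [mem_filter] at hw ⊢
        exact ⟨hw.1, hw.2.1⟩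
      have hc : (univ.filter fun u : Fin n → Bool => ∀ i ∈ S, u i = v i).card
          ≤ (univ.filter fun u : Fin n → Bool => (∀ i ∈ S, u i = v i) ∧ DOC B u = false).card := by
        have := card_agree v S
        have h' : ((univ.filter fun u : Fin n → Bool =>
            (∀ i ∈ S, u i = v i) ∧ DOC B u = false).card : ℝ) = 2 ^ (n - S.card) := h
        have h'' : (univ.filter fun u : Fin n → Bool =>
            (∀ i ∈ S, u i = v i) ∧ DOC B u = false).card = 2 ^ (n - S.card) := by
          exact_mod_cast h'
        rw [this, h'']
      have heq := Finset.eq_of_subset_of_card_le hsub hc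
      have hmem : u ∈ univ.filter fun u : Fin n → Bool => (∀ i ∈ S, u i = v i) ∧ DOC B u = false := by
        rw [heq]
        simp only [mem_filter, mem_univ, true_and]
        exact hu
      exact (mem_filter.mp hmem).2.2
    · intro h
      have heq : (univ.filter fun u : Fin n → Bool => (∀ i ∈ S, u i = v i) ∧ DOC B u = false)
          = univ.filter fun u : Fin n → Bool => ∀ i ∈ S, u i = v i := by
        ext u
        simp only [mem_filter, mem_univ, true_and]
        exact ⟨fun hh => hh.1, fun hh => ⟨hh, h u hh⟩⟩
      rw [heq, card_agree]
      push_cast; ring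
  rw [hcard]
  constructor
  · intro h j
    by_contra hc
    push_neg at hc
    set u : Fin n → Bool := fun i => if i ∈ S then v i else true with hu
    have hagree : ∀ i ∈ S, u i = v i := fun i hi => by simp [hu, hi]
    have := h u hagree
    have hall : ∀ i ∈ B j, u i = true := by
      intro i hi
      by_cases hiS : i ∈ S
      · have := hc i hiS hi
        simp [hu, hiS]
        cases hvi : v i
        · exact absurd hvi (this)
        · rfl
      · simp [hu, hiS]
    have : DOC B u = true := by
      simp only [DOC, decide_eq_true_eq]
      exact ⟨j, hall⟩
    simp_all
  · intro h u hagree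
    simp only [DOC, decide_eq_false_iff_not, not_exists]
    intro j hall
    obtain ⟨i, hiS, hiB, hvi⟩ := h j
    have := hall i hiB
    rw [hagree i hiS, hvi] at this
    exact Bool.false_ne_true this

lemma docMinimal_iff (hBdisj : ∀ j j', j ≠ j' → Disjoint (B j) (B j'))
    (hBcover : ∀ i : Fin n, ∃ j, i ∈ B j) (S : Finset (Fin n)) :
    ((∀ j, ∃ i ∈ S, i ∈ B j ∧ v i = false) ∧
      ∀ T ⊂ S, ¬ ∀ j, ∃ i ∈ T, i ∈ B j ∧ v i = false)
    ↔ ((∀ i ∈ S, v i = false) ∧ ∀ j, (S ∩ B j).card = 1) := by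
  constructor
  · rintro ⟨hP, hmin⟩
    choose g hgS hgB hgv using hP
    set T : Finset (Fin n) := univ.image g with hT
    have hTS : T ⊆ S := by
      intro i hi
      simp only [hT, mem_image, mem_univ, true_and] at hi
      obtain ⟨j, rfl⟩ := hi
      exact hgS j
    have hTP : ∀ j, ∃ i ∈ T, i ∈ B j ∧ v i = false := by
      intro j
      exact ⟨g j, by simp [hT], hgB j, hgv j⟩
    have hTeq : T = S := by
      by_contra hne
      exact hmin T (ssubset_of_subset_of_ne hTS hne) hTP
    constructor
    · intro i hi
      rw [← hTeq] at hi
      simp only [hT, mem_image, mem_univ, true_and] at hi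
      obtain ⟨j, rfl⟩ := hi
      exact hgv j
    · intro j
      have hsingle : S ∩ B j = {g j} := by
        ext i
        simp only [mem_inter, mem_singleton]
        constructor
        · rintro ⟨hiS, hiB⟩
          rw [← hTeq] at hiS
          simp only [hT, mem_image, mem_univ, true_and] at hiS
          obtain ⟨j', rfl⟩ := hiS
          by_contra hne
          have hjj : j' ≠ j := by
            rintro rfl; exact hne rfl
          exact absurd hiB (Finset.disjoint_left.mp (hBdisj j' j hjj) (hgB j'))
        · rintro rfl
          exact ⟨hgS j, hgB j⟩
      rw [hsingle, card_singleton]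
  · rintro ⟨hv0, hcard⟩
    constructor
    · intro j
      obtain ⟨i, hi⟩ := Finset.card_eq_one.mp (hcard j)
      have hiS : i ∈ S ∩ B j := by rw [hi]; exact mem_singleton_self i
      rw [mem_inter] at hiS
      exact ⟨i, hiS.1, hiS.2, hv0 i hiS.1⟩
    · rintro T hT hTP
      obtain ⟨i₀, hi₀S, hi₀T⟩ := Finset.exists_of_ssubset hT
      obtain ⟨j₀, hj₀⟩ := hBcover i₀
      obtain ⟨i, hiT, hiB, _⟩ := hTP j₀
      obtain ⟨w, hw⟩ := Finset.card_eq_one.mp (hcard j₀)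
      have h1 : i ∈ S ∩ B j₀ := mem_inter.mpr ⟨hT.1 hiT, hiB⟩
      have h2 : i₀ ∈ S ∩ B j₀ := mem_inter.mpr ⟨hi₀S, hj₀⟩
      rw [hw, mem_singleton] at h1 h2
      refine hi₀T ?_
      rw [h2, ← h1]
      exact hiT

end Aux2
/-- For a DOC gate with no block all-ones in `v` (so `Y = 0`), the actual-cause candidate set
`x*(0)` is exactly the set of restrictions `v|S` with all fixed inputs in state `0` and exactly
one fixed input from each conjunction: the actual cause of `{Y = 0}` consists of exactly one
input in state `0` from each conjunction. -/
theorem doc_actual_cause_of_off_state (n K : ℕ) (hK : 1 ≤ K)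
    (B : Fin K → Finset (Fin n)) (hBne : ∀ j, (B j).Nonempty)
    (hBdisj : ∀ j j', j ≠ j' → Disjoint (B j) (B j'))
    (hBcover : ∀ i : Fin n, ∃ j, i ∈ B j)
    (v : Fin n → Bool) (hv : ∀ j, ¬ ∀ i ∈ B j, v i = true) :
    causeCandidates (DOC B) v false =
      {S : Finset (Fin n) | (∀ i ∈ S, v i = false) ∧ ∀ j, (S ∩ B j).card = 1} := by
  have hDOCv : DOC B v = false := by
    simp only [DOC, decide_eq_false_iff_not, not_exists]
    exact hv
  have hpos : ∀ S : Finset (Fin n), 0 < effProb (DOC B) v S false :=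
    effProb_false_pos v (DOC B) hDOCv
  have hle : ∀ S : Finset (Fin n), effProb (DOC B) v S false ≤ 1 := fun S =>
    effProb_le_one v (DOC B) S false
  have hπ₀ : 0 < effProb (DOC B) v ∅ false := hpos ∅
  -- witness S₀ with effProb = 1
  have hg : ∀ j, ∃ i, i ∈ B j ∧ v i = false := by
    intro j
    have h := hv j
    push_neg at h
    obtain ⟨i, hi, hvi⟩ := h
    exact ⟨i, hi, Bool.eq_false_iff.mpr hvi⟩
  choose g hgB hgv using hg
  set S₀ : Finset (Fin n) := univ.image g with hS₀def
  have hS₀ : effProb (DOC B) v S₀ false = 1 := by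
    rw [effProb_false_eq_one_iff]
    intro j
    exact ⟨g j, by simp [hS₀def], hgB j, hgv j⟩
  -- ratio lemmas
  have hρle : ∀ S T : Finset (Fin n), effProb (DOC B) v S false = 1 →
      causeRatio (DOC B) v T false ≤ causeRatio (DOC B) v S false := by
    intro S T hS
    unfold causeRatio
    apply Real.logb_le_logb_of_le one_lt_two (div_pos (hpos T) hπ₀)
    rw [div_le_div_iff_of_pos_right hπ₀, hS]
    exact hle T
  have hρlt : ∀ S T : Finset (Fin n), effProb (DOC B) v S false = 1 →
      effProb (DOC B) v T false < 1 →
      causeRatio (DOC B) v T false < causeRatio (DOC B) v S false := by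
    intro S T hS hT
    unfold causeRatio
    apply Real.logb_lt_logb one_lt_two (div_pos (hpos T) hπ₀)
    rw [div_lt_div_iff_of_pos_right hπ₀, hS]
    exact hT
  ext S
  simp only [causeCandidates, Set.mem_setOf_eq]
  rw [← docMinimal_iff B v hBdisj hBcover S]
  constructor
  · rintro ⟨h1, h2⟩
    have hS1 : effProb (DOC B) v S false = 1 := by
      by_contra hne
      have hlt : effProb (DOC B) v S false < 1 := lt_of_le_of_ne (hle S) hne
      exact absurd (h1 S₀) (not_le.mpr (hρlt S₀ S hS₀ hlt))
    refine ⟨(effProb_false_eq_one_iff B v S).mp hS1, ?_⟩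
    intro T hT hPT
    have hT1 : effProb (DOC B) v T false = 1 := (effProb_false_eq_one_iff B v T).mpr hPT
    apply h2 T hT
    unfold causeRatio
    rw [hT1, hS1]
  · rintro ⟨hPS, hmin⟩
    have hS1 : effProb (DOC B) v S false = 1 := (effProb_false_eq_one_iff B v S).mpr hPS
    refine ⟨fun T => hρle S T hS1, ?_⟩
    intro T hT
    have hPT : ¬ ∀ j, ∃ i ∈ T, i ∈ B j ∧ v i = false := hmin T hT
    have hT1 : effProb (DOC B) v T false ≠ 1 := fun h =>
      hPT ((effProb_false_eq_one_iff B v T).mp h)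
    exact ne_of_lt (hρlt S T hS1 (lt_of_le_of_ne (hle T) hT1))
end

section
/- Let Y be a disjunction-of-conjunctions gate over disjoint blocks B_1,…,B_K, and let v ∈ {0,1}^n be an actual input state in which no block is all-ones (so the actual outcome is Y = 0). Then a nonempty occurrence x = v|S has actual effect {Y = 0} (i.e., α_e(x) > 0) if and only if v_i = 0 for every i ∈ S and |S ∩ B_j| ≤ 1 for every j; every other nonempty occurrence — in particular any occurrence fixing an input to 1, and any all-zeros occurrence fixing two or more inputs of the same conjunction to 0 — is reducible, α_e(x) ≤ 0. -/
open Finset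

/-- Irreducible effect ratio of a nonempty occurrence `v|S` on outcome `y`:
`α_e = log₂( π(y | v|S) / max_{T ⊊ S} π(y | v|T) )`. -/
noncomputable def alphaE {n : ℕ} (Y : (Fin n → Bool) → Bool) (v : Fin n → Bool)
    (S : Finset (Fin n)) (hS : S.Nonempty) (y : Bool) : ℝ :=
  Real.logb 2 (effProb Y v S y /
    S.ssubsets.sup' ⟨∅, Finset.empty_mem_ssubsets hS⟩ (fun T => effProb Y v T y))

/-!
Forgetting an input `i ∈ S` replaces `π(0 | v|S)` by the average of `π(0 | v|S)` and
`π(0 | v'|S)`, where `v'` flips `v` at `i`. The gate is monotone, so turning a fixed `1` into a `0`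
can only raise the probability of `0`: an occurrence fixing a `1` is reducible. Turning a fixed `0`
at `i` into a `1` changes nothing when `S` fixes another `0` in the block of `i`, and strictly
lowers the probability when `i` is the only input of its block in `S`, since the block can then be
completed to all ones. So for all-zero occurrences meeting each block at most once (a property
inherited by subsets) `π` strictly decreases with every removal, while every other occurrence has a
single removal that does not decrease it.
-/

open Function

section Occurrence

variable {n : ℕ} {Y : (Fin n → Bool) → Bool} {v w u x : Fin n → Bool} {S : Finset (Fin n)}
  {y : Bool}

def completions (Y : (Fin n → Bool) → Bool) (v : Fin n → Bool) (S : Finset (Fin n))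
    (y : Bool) : Finset (Fin n → Bool) :=
  univ.filter fun u => (∀ i ∈ S, u i = v i) ∧ Y u = y

lemma effProb_eq_card :
    effProb Y v S y = (completions Y v S y).card / 2 ^ (n - S.card) := rfl

lemma effProb_pos (h : Y v = y) : 0 < effProb Y v S y := by
  rw [effProb_eq_card]
  have : (completions Y v S y).Nonempty := ⟨v, by simp [completions, h]⟩
  positivity

lemma piecewise_piecewise_of_agree (hu : ∀ k ∈ S, u k = v k) :
    S.piecewise v (S.piecewise w u) = u := by
  ext k
  by_cases hk : k ∈ S <;> simp [hk, hu]

lemma piecewise_update_of_agree {i : Fin n} {b : Bool} (hi : i ∈ S)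
    (hu : ∀ k ∈ S, u k = v k) : S.piecewise (update v i b) u = update u i b := by
  ext k
  by_cases hk : k ∈ S <;> by_cases hki : k = i <;> simp_all

/-- Resetting the inputs in `S` from `v` to `w` sends completions of `v|S` injectively to
completions of `w|S`. -/
lemma card_completions_le_of_mapsTo {t : Finset (Fin n → Bool)}
    (hmaps : ∀ u ∈ completions Y v S y, S.piecewise w u ∈ t) :
    (completions Y v S y).card ≤ t.card := by
  refine card_le_card_of_injOn (fun u => S.piecewise w u) hmaps fun u₁ hu₁ u₂ hu₂ heq => ?_
  simp only [coe_filter, completions, mem_univ, true_and, Set.mem_ofPred_eq] at hu₁ hu₂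
  simp only at heq
  rw [← piecewise_piecewise_of_agree (w := w) hu₁.1, heq, piecewise_piecewise_of_agree hu₂.1]

lemma effProb_le_of_piecewise
    (h : ∀ u, (∀ k ∈ S, u k = v k) → Y u = y → Y (S.piecewise w u) = y) :
    effProb Y v S y ≤ effProb Y w S y := by
  simp only [effProb_eq_card]
  gcongr ?_ / _
  norm_cast
  refine card_completions_le_of_mapsTo (w := w) fun u hu => ?_
  simp only [completions, mem_filter, mem_univ, true_and] at hu ⊢
  exact ⟨fun k hk => by simp [hk], h u hu.1 hu.2⟩

/-- The strict version: a completion `x` of `w|S` whose reset to `v` does not produce `y` is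
missed by the injection. -/
lemma effProb_lt_of_piecewise
    (h : ∀ u, (∀ k ∈ S, u k = v k) → Y u = y → Y (S.piecewise w u) = y)
    (hxw : ∀ k ∈ S, x k = w k) (hx : Y x = y) (hvx : Y (S.piecewise v x) ≠ y) :
    effProb Y v S y < effProb Y w S y := by
  simp only [effProb_eq_card]
  have hxmem : x ∈ completions Y w S y := mem_filter.2 ⟨mem_univ x, hxw, hx⟩
  gcongr ?_ / _
  norm_cast
  calc (completions Y v S y).card ≤ ((completions Y w S y).erase x).card := by
        refine card_completions_le_of_mapsTo (w := w) fun u hu => ?_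
        simp only [completions, mem_filter, mem_univ, true_and, mem_erase] at hu ⊢
        refine ⟨fun hux => ?_, fun k hk => by simp [hk], h u hu.1 hu.2⟩
        rw [← hux, piecewise_piecewise_of_agree hu.1] at hvx
        exact hvx hu.2
    _ < (completions Y w S y).card := card_erase_lt_of_mem hxmem

lemma piecewise_le_of_agree (hwv : w ≤ v) (hu : ∀ k ∈ S, u k = v k) :
    S.piecewise w u ≤ u := by
  intro k
  by_cases hk : k ∈ S
  · simpa [hk, hu k hk] using hwv k
  · simp [hk]

lemma piecewise_eq_false_of_monotone (hY : Monotone Y) (hwv : w ≤ v) (hu : ∀ k ∈ S, u k = v k)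
    (hYu : Y u = false) : Y (S.piecewise w u) = false :=
  Bool.eq_false_of_le_false (hYu ▸ hY (piecewise_le_of_agree hwv hu))

lemma effProb_false_le_of_le (hY : Monotone Y) (hwv : w ≤ v) :
    effProb Y v S false ≤ effProb Y w S false :=
  effProb_le_of_piecewise fun _ => piecewise_eq_false_of_monotone hY hwv

lemma effProb_false_lt_of_le (hY : Monotone Y) (hwv : w ≤ v) (hxw : ∀ k ∈ S, x k = w k)
    (hx : Y x = false) (hvx : Y (S.piecewise v x) = true) :
    effProb Y v S false < effProb Y w S false :=
  effProb_lt_of_piecewise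
    (fun _ => piecewise_eq_false_of_monotone hY hwv) hxw hx
    (by simp [hvx])

lemma effProb_erase {i : Fin n} (hi : i ∈ S) :
    effProb Y v (S.erase i) y = (effProb Y v S y + effProb Y (update v i (!v i)) S y) / 2 := by
  have hsplit : completions Y v (S.erase i) y =
      completions Y v S y ∪ completions Y (update v i (!v i)) S y := by
    ext u
    simp only [completions, mem_filter, mem_univ, true_and, mem_union, ← or_and_right]
    refine and_congr_left' ⟨fun h => ?_, ?_⟩
    · by_cases hui : u i = v i
      · refine .inl fun k hk => ?_
        by_cases hki : k = i
        · exact hki ▸ hui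
        · exact h k (mem_erase.2 ⟨hki, hk⟩)
      · refine .inr fun k hk => ?_
        by_cases hki : k = i
        · subst hki
          simpa [Bool.eq_not_iff] using hui
        · simpa [hki] using h k (mem_erase.2 ⟨hki, hk⟩)
    · rintro (h | h) k hk
      · exact h k (mem_of_mem_erase hk)
      · simpa [ne_of_mem_erase hk] using h k (mem_of_mem_erase hk)
  have hdisj : Disjoint (completions Y v S y) (completions Y (update v i (!v i)) S y) := by
    refine disjoint_filter.2 fun u _ hu hu' => ?_
    simpa [hu.1 i hi] using hu'.1 i hi
  have hcard : (S.erase i).card + 1 = S.card := card_erase_add_one hi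
  have hle : S.card ≤ n := by simpa using card_le_univ S
  simp only [effProb_eq_card, hsplit, card_union_of_disjoint hdisj]
  rw [show n - (S.erase i).card = n - S.card + 1 by omega, pow_succ]
  push_cast
  ring

lemma alphaE_pos_iff (h : Y v = y) (hS : S.Nonempty) :
    0 < alphaE Y v S hS y ↔ ∀ T ⊂ S, effProb Y v T y < effProb Y v S y := by
  have hmax : 0 < S.ssubsets.sup' ⟨∅, empty_mem_ssubsets hS⟩ (effProb Y v · y) :=
    (effProb_pos h).trans_le (le_sup' (effProb Y v · y) (empty_mem_ssubsets hS))
  rw [alphaE, Real.logb_pos_iff one_lt_two (div_pos (effProb_pos h) hmax), one_lt_div hmax]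
  exact (sup'_lt_iff _).trans (by simp only [mem_ssubsets])

end Occurrence

section Gate

variable {n K : ℕ} {B : Fin K → Finset (Fin n)} {v u : Fin n → Bool} {S : Finset (Fin n)}
  {i i' : Fin n} {j : Fin K}

lemma monotone_DOC (B : Fin K → Finset (Fin n)) : Monotone (DOC B) := by
  intro u w huw
  simp only [DOC, Bool.le_iff_imp, decide_eq_true_eq]
  rintro ⟨j, hj⟩
  exact ⟨j, fun i hi => Bool.eq_true_of_true_le (hj i hi ▸ huw i)⟩

lemma DOC_eq_false (hv : ∀ j, ¬ ∀ i ∈ B j, v i = true) : DOC B v = false :=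
  decide_eq_false (not_exists.2 hv)

lemma DOC_update_eq_false (hBdisj : ∀ j j', j ≠ j' → Disjoint (B j) (B j'))
    (hi : i ∈ B j) (hi' : i' ∈ B j) (hne : i' ≠ i) (hu' : u i' = false) (hu : DOC B u = false)
    (b : Bool) : DOC B (update u i b) = false := by
  refine decide_eq_false ?_
  rintro ⟨l, hl⟩
  by_cases hlj : l = j
  · subst hlj
    simpa [update_of_ne hne, hu'] using hl i' hi'
  · refine of_decide_eq_false hu ⟨l, fun k hk => ?_⟩
    have hki : k ≠ i := fun hki => disjoint_left.1 (hBdisj l j hlj) hk (hki ▸ hi)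
    simpa [update_of_ne hki] using hl k hk

lemma effProb_le_erase_of_true (hi : i ∈ S) (hvi : v i = true) :
    effProb (DOC B) v S false ≤ effProb (DOC B) v (S.erase i) false := by
  have hle : update v i (!v i) ≤ v := update_le_self_iff.2 (by simp [hvi])
  have := effProb_false_le_of_le (S := S) (monotone_DOC B) hle
  rw [effProb_erase hi]
  linarith

lemma effProb_le_erase_of_pair (hBdisj : ∀ j j', j ≠ j' → Disjoint (B j) (B j'))
    (hi : i ∈ S ∩ B j) (hi' : i' ∈ S ∩ B j) (hne : i' ≠ i) (hvi' : v i' = false) :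
    effProb (DOC B) v S false ≤ effProb (DOC B) v (S.erase i) false := by
  rw [mem_inter] at hi hi'
  have : effProb (DOC B) v S false ≤ effProb (DOC B) (update v i (!v i)) S false :=
    effProb_le_of_piecewise fun u hu hYu => by
      rw [piecewise_update_of_agree hi.1 hu]
      exact DOC_update_eq_false hBdisj hi.2 hi'.2 hne (hu i' hi'.1 ▸ hvi') hYu _
  rw [effProb_erase hi.1]
  linarith

/-- The witness `x` switches on every input of the block of `i` outside `S`: it is a completion of
`v|S` on which the gate is off, but fixing `i` to `1` instead turns the whole block on. -/
lemma effProb_erase_lt (hBdisj : ∀ j j', j ≠ j' → Disjoint (B j) (B j'))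
    (hBcover : ∀ i : Fin n, ∃ j, i ∈ B j) (hv : ∀ j, ¬ ∀ i ∈ B j, v i = true)
    (hS1 : ∀ j, (S ∩ B j).card ≤ 1) (hi : i ∈ S) (hvi : v i = false) :
    effProb (DOC B) v (S.erase i) false < effProb (DOC B) v S false := by
  classical
  obtain ⟨j, hij⟩ := hBcover i
  let x : Fin n → Bool := fun k => if k ∈ B j ∧ k ∉ S then true else v k
  have hxv : ∀ k ∈ S, x k = v k := fun k hk => by simp [x, hk]
  have hx : DOC B x = false := by
    refine decide_eq_false ?_
    rintro ⟨l, hl⟩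
    by_cases hlj : l = j
    · subst hlj
      simpa [hxv i hi, hvi] using hl i hij
    · obtain ⟨k, hk, hvk⟩ := not_forall₂.1 (hv l)
      have hkj : k ∉ B j := disjoint_left.1 (hBdisj l j hlj) hk
      exact hvk (by simpa [x, hkj] using hl k hk)
  have hon : DOC B (S.piecewise (update v i true) x) = true := by
    refine decide_eq_true ⟨j, fun k hk => ?_⟩
    by_cases hkS : k ∈ S
    · have hki : k = i :=
        card_le_one.1 (hS1 j) k (mem_inter.2 ⟨hkS, hk⟩) i (mem_inter.2 ⟨hi, hij⟩)
      rw [piecewise_eq_of_mem _ _ _ hkS, hki, update_self]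
    · rw [piecewise_eq_of_notMem _ _ _ hkS]
      simp [x, hkS, hk]
  have hle : v ≤ update v i true := le_update_self_iff.2 le_top
  have hlt := effProb_false_lt_of_le (monotone_DOC B) hle hxv hx hon
  rw [effProb_erase hi, hvi, Bool.not_false]
  linarith

lemma effProb_lt_of_ssubset (hBdisj : ∀ j j', j ≠ j' → Disjoint (B j) (B j'))
    (hBcover : ∀ i : Fin n, ∃ j, i ∈ B j) (hv : ∀ j, ¬ ∀ i ∈ B j, v i = true)
    (hS0 : ∀ i ∈ S, v i = false) (hS1 : ∀ j, (S ∩ B j).card ≤ 1) {T : Finset (Fin n)}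
    (hTS : T ⊂ S) : effProb (DOC B) v T false < effProb (DOC B) v S false := by
  induction S using Finset.strongInduction with
  | H S ih =>
    obtain ⟨i, hiS, hiT⟩ := exists_of_ssubset hTS
    have hlt := effProb_erase_lt hBdisj hBcover hv hS1 hiS (hS0 i hiS)
    rcases (subset_erase.2 ⟨hTS.subset, hiT⟩).eq_or_ssubset with rfl | hT
    · exact hlt
    · refine (ih _ (erase_ssubset hiS) (fun k hk => hS0 k (mem_of_mem_erase hk))
        (fun j => (card_le_card (inter_subset_inter_right (erase_subset i S))).trans (hS1 j))
        hT).trans hlt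

lemma exists_effProb_le_erase (hBdisj : ∀ j j', j ≠ j' → Disjoint (B j) (B j'))
    (h : ¬ ((∀ i ∈ S, v i = false) ∧ ∀ j, (S ∩ B j).card ≤ 1)) :
    ∃ i ∈ S, effProb (DOC B) v S false ≤ effProb (DOC B) v (S.erase i) false := by
  by_cases hS0 : ∀ i ∈ S, v i = false
  · obtain ⟨j, hj⟩ := not_forall.1 (not_and.1 h hS0)
    obtain ⟨i, hi, i', hi', hne⟩ := one_lt_card.1 (not_le.1 hj)
    exact ⟨i, (mem_inter.1 hi).1,
      effProb_le_erase_of_pair hBdisj hi hi' (Ne.symm hne) (hS0 i' (mem_inter.1 hi').1)⟩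
  · obtain ⟨i, hi, hvi⟩ := not_forall₂.1 hS0
    exact ⟨i, hi, effProb_le_erase_of_true hi (by simpa using hvi)⟩

end Gate

theorem doc_actual_effects_of_off_state_general (n K : ℕ)
    (B : Fin K → Finset (Fin n))
    (hBdisj : ∀ j j', j ≠ j' → Disjoint (B j) (B j'))
    (hBcover : ∀ i : Fin n, ∃ j, i ∈ B j)
    (v : Fin n → Bool) (hv : ∀ j, ¬ ∀ i ∈ B j, v i = true)
    (S : Finset (Fin n)) (hS : S.Nonempty) :
    (0 < alphaE (DOC B) v S hS false ↔
      (∀ i ∈ S, v i = false) ∧ ∀ j, (S ∩ B j).card ≤ 1) ∧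
    (¬ ((∀ i ∈ S, v i = false) ∧ ∀ j, (S ∩ B j).card ≤ 1) →
      alphaE (DOC B) v S hS false ≤ 0) := by
  have hpos : 0 < alphaE (DOC B) v S hS false ↔
      (∀ i ∈ S, v i = false) ∧ ∀ j, (S ∩ B j).card ≤ 1 := by
    rw [alphaE_pos_iff (DOC_eq_false hv)]
    refine ⟨fun h => ?_, fun ⟨hS0, hS1⟩ _ hT =>
      effProb_lt_of_ssubset hBdisj hBcover hv hS0 hS1 hT⟩
    by_contra hbad
    obtain ⟨i, hi, hle⟩ := exists_effProb_le_erase hBdisj hbad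
    exact (h _ (erase_ssubset hi)).not_ge hle
  exact ⟨hpos, fun h => not_lt.1 (mt hpos.1 h)⟩

/-- For a DOC gate with no block all-ones in `v` (so `Y = 0`), a nonempty occurrence `v|S` has
actual effect `{Y = 0}` (`α_e > 0`) iff all inputs fixed by `S` are in state `0` and `S` fixes
at most one input of each conjunction; every other nonempty occurrence — in particular any
occurrence fixing an input to `1`, and any all-zeros occurrence fixing two or more inputs of
the same conjunction — is reducible (`α_e ≤ 0`). -/
theorem doc_actual_effects_of_off_state (n K : ℕ) (hK : 1 ≤ K)
    (B : Fin K → Finset (Fin n)) (hBne : ∀ j, (B j).Nonempty)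
    (hBdisj : ∀ j j', j ≠ j' → Disjoint (B j) (B j'))
    (hBcover : ∀ i : Fin n, ∃ j, i ∈ B j)
    (v : Fin n → Bool) (hv : ∀ j, ¬ ∀ i ∈ B j, v i = true)
    (S : Finset (Fin n)) (hS : S.Nonempty) :
    (0 < alphaE (DOC B) v S hS false ↔
      (∀ i ∈ S, v i = false) ∧ ∀ j, (S ∩ B j).card ≤ 1) ∧
    (¬ ((∀ i ∈ S, v i = false) ∧ ∀ j, (S ∩ B j).card ≤ 1) →
      alphaE (DOC B) v S hS false ≤ 0) :=
  doc_actual_effects_of_off_state_general n K B hBdisj hBcover v hv S hS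
end
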